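/- Let f be a surjective isometry of the 1-Wasserstein space over a countable discrete metric space X. Then there exists a bijection σ : X → X such that f(μ)({x}) = μ({σ⁻¹(x)}) for all x ∈ X and all probability measures μ; i.e., f is the pushforward by σ. In particular, the Wasserstein space over a countable discrete space is isometrically rigid. -/

import Mathlib

/-!
An isometry of `W₁` preserves the overlap `(μ ∧ ν)(X)` of two probability vectors. Overlap with
a Dirac mass `δₓ` reads off the atom `μ x`, so if `f δₓ` had two atoms `a ≠ b`, their preimages
`f⁻¹ δₐ` and `f⁻¹ δ_b` would both charge `x`, although `δₐ` and `δ_b`, hence also their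
preimages, have overlap zero. Thus `f δₓ = δ_{σ x}`, and overlapping `f μ` with `f δₓ` gives
`f μ (σ x) = μ x`; that `σ` is a bijection follows from the same identity.
-/

open scoped ENNReal

namespace DiscreteWasserstein

variable {X : Type*}

def probabilityVectors (X : Type*) : Set (X → ℝ≥0∞) := {μ | ∑' x, μ x = 1}

noncomputable def overlap (μ ν : X → ℝ≥0∞) : ℝ≥0∞ := ∑' x, min (μ x) (ν x)

lemma overlap_comm (μ ν : X → ℝ≥0∞) : overlap μ ν = overlap ν μ := by
  simp only [overlap, min_comm]

lemma overlap_le_tsum_left (μ ν : X → ℝ≥0∞) : overlap μ ν ≤ ∑' x, μ x :=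
  ENNReal.tsum_le_tsum fun _ => min_le_left _ _

lemma exists_apply_ne_zero_of_mem_probabilityVectors {μ : X → ℝ≥0∞}
    (hμ : μ ∈ probabilityVectors X) : ∃ x, μ x ≠ 0 := by
  by_contra! h
  exact zero_ne_one ((ENNReal.tsum_eq_zero.mpr h).symm.trans hμ)

lemma apply_le_one_of_mem_probabilityVectors {μ : X → ℝ≥0∞} (hμ : μ ∈ probabilityVectors X)
    (x : X) : μ x ≤ 1 :=
  hμ ▸ ENNReal.le_tsum x

section Dirac

variable [DecidableEq X]

lemma single_mem_probabilityVectors (x : X) : Pi.single x 1 ∈ probabilityVectors X :=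
  tsum_pi_single x 1

lemma overlap_single_right {μ : X → ℝ≥0∞} {x : X} (hx : μ x ≤ 1) :
    overlap μ (Pi.single x 1) = μ x := by
  rw [overlap, tsum_eq_single x fun y hy => by simp [Pi.single_eq_of_ne hy]]
  simpa using hx

lemma overlap_single_left {μ : X → ℝ≥0∞} {x : X} (hx : μ x ≤ 1) :
    overlap (Pi.single x 1) μ = μ x := by
  rw [overlap_comm, overlap_single_right hx]

lemma overlap_single_single (a b : X) :
    overlap (Pi.single a 1 : X → ℝ≥0∞) (Pi.single b 1) = (Pi.single a 1 : X → ℝ≥0∞) b :=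
  overlap_single_right (apply_le_one_of_mem_probabilityVectors (single_mem_probabilityVectors a) b)

lemma exists_eq_single_of_atoms_disjoint {ρ : X → ℝ≥0∞} (hρ : ρ ∈ probabilityVectors X)
    (hdisj : ∀ a b, a ≠ b → ρ a = 0 ∨ ρ b = 0) : ∃ a, ρ = Pi.single a 1 := by
  obtain ⟨a, ha⟩ := exists_apply_ne_zero_of_mem_probabilityVectors hρ
  have hzero : ∀ b, b ≠ a → ρ b = 0 := fun b hb => (hdisj a b hb.symm).resolve_left ha
  have hone : ρ a = 1 := (tsum_eq_single a hzero).symm.trans hρ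
  refine ⟨a, funext fun b => ?_⟩
  rcases eq_or_ne b a with rfl | hb
  · simp [hone]
  · simp [hzero b hb, Pi.single_eq_of_ne hb]

end Dirac

def PreservesOverlap (f : (X → ℝ≥0∞) → (X → ℝ≥0∞)) : Prop :=
  ∀ μ ∈ probabilityVectors X, ∀ ν ∈ probabilityVectors X, overlap (f μ) (f ν) = overlap μ ν

lemma preservesOverlap_of_one_sub_overlap_eq {f : (X → ℝ≥0∞) → (X → ℝ≥0∞)}
    (hf : Set.MapsTo f (probabilityVectors X) (probabilityVectors X))
    (hiso : ∀ μ ∈ probabilityVectors X, ∀ ν ∈ probabilityVectors X,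
      1 - overlap (f μ) (f ν) = 1 - overlap μ ν) :
    PreservesOverlap f := fun μ hμ ν hν =>
  (ENNReal.sub_right_inj ENNReal.one_ne_top ((hf hμ).symm ▸ overlap_le_tsum_left _ _)
    (hμ.symm ▸ overlap_le_tsum_left _ _)).mp (hiso μ hμ ν hν)

namespace PreservesOverlap

variable [DecidableEq X] {f : (X → ℝ≥0∞) → (X → ℝ≥0∞)} (hf : PreservesOverlap f)
  (hmaps : Set.MapsTo f (probabilityVectors X) (probabilityVectors X))
include hf hmaps

lemma apply_eq_of_map_single {μ : X → ℝ≥0∞} (hμ : μ ∈ probabilityVectors X) {x a : X}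
    (hx : f (Pi.single x 1) = Pi.single a 1) : f μ a = μ x := by
  have h := hf μ hμ _ (single_mem_probabilityVectors x)
  rwa [hx, overlap_single_right (apply_le_one_of_mem_probabilityVectors (hmaps hμ) a),
    overlap_single_right (apply_le_one_of_mem_probabilityVectors hμ x)] at h

lemma exists_map_single_eq_single
    (hsurj : Set.SurjOn f (probabilityVectors X) (probabilityVectors X)) (x : X) :
    ∃ a, f (Pi.single x 1) = Pi.single a 1 := by
  set ρ := f (Pi.single x 1)
  have hρ : ρ ∈ probabilityVectors X := hmaps (single_mem_probabilityVectors x)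
  refine exists_eq_single_of_atoms_disjoint hρ fun a b hab => ?_
  obtain ⟨α, hα, hαa⟩ := hsurj (single_mem_probabilityVectors a)
  obtain ⟨β, hβ, hβb⟩ := hsurj (single_mem_probabilityVectors b)
  have charge (γ : X → ℝ≥0∞) (hγ : γ ∈ probabilityVectors X) (c : X)
      (hγc : f γ = Pi.single c 1) : γ x = ρ c := by
    have h := hf γ hγ _ (single_mem_probabilityVectors x)
    rwa [hγc, overlap_single_left (apply_le_one_of_mem_probabilityVectors hρ c),
      overlap_single_right (apply_le_one_of_mem_probabilityVectors hγ x), eq_comm] at h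
  have hαβ : overlap α β = 0 := by
    rw [← hf α hα β hβ, hαa, hβb, overlap_single_single, Pi.single_eq_of_ne hab.symm]
  have hmin : min (α x) (β x) = 0 := ENNReal.tsum_eq_zero.mp hαβ x
  rwa [charge α hα a hαa, charge β hβ b hβb, min_eq_zero] at hmin

end PreservesOverlap

end DiscreteWasserstein

open DiscreteWasserstein

theorem isometry_is_pushforward_general {X : Type*}
    (f : (X → ℝ≥0∞) → (X → ℝ≥0∞))
    (hbij : Set.BijOn f {μ | ∑' x, μ x = 1} {μ | ∑' x, μ x = 1})
    (hiso : ∀ μ ν : X → ℝ≥0∞, (∑' x, μ x = 1) → (∑' x, ν x = 1) →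
      1 - ∑' x, min (f μ x) (f ν x) = 1 - ∑' x, min (μ x) (ν x)) :
    ∃ σ : Equiv.Perm X, ∀ μ : X → ℝ≥0∞, (∑' x, μ x = 1) →
      ∀ x : X, f μ x = μ (σ.symm x) := by
  classical
  have hf : PreservesOverlap f :=
    preservesOverlap_of_one_sub_overlap_eq hbij.mapsTo fun μ hμ ν hν => hiso μ ν hμ hν
  choose s hs using hf.exists_map_single_eq_single hbij.mapsTo hbij.surjOn
  have hfs {μ} (hμ : μ ∈ probabilityVectors X) (x : X) : f μ (s x) = μ x :=
    hf.apply_eq_of_map_single hbij.mapsTo hμ (hs x)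
  have hs_inj : s.Injective := fun x y hxy => by
    have h := hbij.injOn (single_mem_probabilityVectors x) (single_mem_probabilityVectors y)
      (by rw [hs, hs, hxy])
    simpa [Pi.single_apply] using congrFun h x
  have hs_surj : s.Surjective := fun a => by
    obtain ⟨μ, hμ, hμa⟩ := hbij.surjOn (single_mem_probabilityVectors a)
    obtain ⟨x, hx⟩ := exists_apply_ne_zero_of_mem_probabilityVectors hμ
    refine ⟨x, of_not_not fun hne => hx ?_⟩
    rw [← hfs hμ, hμa, Pi.single_eq_of_ne hne]
  let σ := Equiv.ofBijective s ⟨hs_inj, hs_surj⟩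
  refine ⟨σ, fun μ hμ x => ?_⟩
  rw [← hfs hμ, show s (σ.symm x) = x from σ.apply_symm_apply x]

/-- Every surjective isometry f of the 1-Wasserstein space over a countable
discrete metric space X (|X| ≥ 2) is the pushforward by a bijection σ of X:
f(μ)({x}) = μ({σ⁻¹(x)}). In particular, the space is isometrically rigid. -/
theorem isometry_is_pushforward {X : Type*} [Countable X] [DecidableEq X] [Nontrivial X]
    (f : (X → ℝ≥0∞) → (X → ℝ≥0∞))
    (hbij : Set.BijOn f {μ | ∑' x, μ x = 1} {μ | ∑' x, μ x = 1})
    (hiso : ∀ μ ν : X → ℝ≥0∞, (∑' x, μ x = 1) → (∑' x, ν x = 1) →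
      1 - ∑' x, min (f μ x) (f ν x) = 1 - ∑' x, min (μ x) (ν x)) :
    ∃ σ : Equiv.Perm X, ∀ μ : X → ℝ≥0∞, (∑' x, μ x = 1) →
      ∀ x : X, f μ x = μ (σ.symm x) :=
  isometry_is_pushforward_general f hbij hiso
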